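/- Let V be an n×n symmetric matrix (n ≥ 3) with off-diagonal entries v_{ij} satisfying 1/b ≤ v_{ij} ≤ 1/c for positive constants b ≥ c, and diagonal entries v_{ii} = Σ_{j≠i} v_{ij}. Let S = diag(1/v_{11},…,1/v_{nn}). Then every entry of V⁻¹ - S is bounded in absolute value by (2b²/(c(n-1)²))·(nb/(2(n-2)c) + 1/2). -/

import Mathlib

/-!
Write `V = D + A` with `D` the diagonal part of `V`. For a symmetric, diagonally balanced matrix
`2 xᵀVx = ∑_{i ≠ j} v_{ij} (x_i + x_j)²`, so off-diagonal entries `≥ 1/b` give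
`xᵀVx ≥ (n - 2)/b · ‖x‖²`. Hence `V` is invertible with `‖V⁻¹y‖ ≤ b/(n - 2) · ‖y‖`, and by
Cauchy–Schwarz `|(A V⁻¹ A)_{ij}| ≤ b/(n - 2) · n/c²`. The second-order resolvent identity
`V⁻¹ - D⁻¹ = D⁻¹ (A V⁻¹ A - A) D⁻¹`, with `v_{ii} ≥ (n - 1)/b` and `|a_{ij}| ≤ 1/c`, bounds every
entry by `(n/c² · b/(n - 2) + 1/c) · (b/(n - 1))²`, which is the stated constant.
-/

open Finset Matrix

theorem sub_eq_second_order_resolvent {R : Type*} [Ring R] {a a' b b' : R}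
    (ha : a * a' = 1) (ha' : a' * a = 1) (hb : b * b' = 1) (hb' : b' * b = 1) :
    a' - b' = b' * ((a - b) * a' * (a - b) - (a - b)) * b' := by
  have left : a' - b' = -(b' * (a - b) * a') :=
    calc a' - b' = b' * b * a' - b' * (a * a') := by rw [hb', ha, one_mul, mul_one]
      _ = _ := by noncomm_ring
  have right : a' = b' - a' * (a - b) * b' :=
    calc a' = b' - (a' * a * b' - a' * (b * b')) := by rw [ha', hb, one_mul, mul_one]; abel
      _ = _ := by noncomm_ring
  calc a' - b' = -(b' * (a - b) * a') := left
    _ = _ := by nth_rewrite 1 [right]; noncomm_ring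

variable {ι : Type*} [Fintype ι]

theorem sq_dotProduct_le_dotProduct_self_mul (u v : ι → ℝ) :
    (u ⬝ᵥ v) ^ 2 ≤ (u ⬝ᵥ u) * (v ⬝ᵥ v) := by
  simpa only [dotProduct, sq] using sum_mul_sq_le_sq_mul_sq univ u v

theorem dotProduct_self_le_card_mul_sq {x : ι → ℝ} {α : ℝ} (hx : ∀ i, |x i| ≤ α) :
    x ⬝ᵥ x ≤ Fintype.card ι * α ^ 2 := by
  calc x ⬝ᵥ x ≤ ∑ _i : ι, α ^ 2 :=
        sum_le_sum fun i _ ↦ by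
          rw [← sq, ← sq_abs]; exact pow_le_pow_left₀ (abs_nonneg _) (hx i) 2
    _ = _ := by simp

theorem dotProduct_self_nonneg (x : ι → ℝ) : 0 ≤ x ⬝ᵥ x :=
  sum_nonneg fun i _ ↦ mul_self_nonneg (x i)

namespace Matrix

variable [DecidableEq ι] {M : Matrix ι ι ℝ} {μ : ℝ}

theorem isUnit_det_of_coercive (hμ : 0 < μ) (hM : ∀ x, μ * (x ⬝ᵥ x) ≤ x ⬝ᵥ M *ᵥ x) :
    IsUnit M.det := by
  rw [← isUnit_iff_isUnit_det, ← mulVec_injective_iff_isUnit, ← coe_mulVecLin,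
    injective_iff_map_eq_zero]
  intro x hx
  rw [mulVecLin_apply] at hx
  have hx' : μ * (x ⬝ᵥ x) ≤ 0 := by simpa [hx] using hM x
  exact dotProduct_self_eq_zero.mp
    ((nonpos_of_mul_nonpos_right hx' hμ).antisymm (dotProduct_self_nonneg x))

theorem sq_mul_dotProduct_self_inv_mulVec_le (hμ : 0 < μ)
    (hM : ∀ x, μ * (x ⬝ᵥ x) ≤ x ⬝ᵥ M *ᵥ x) (v : ι → ℝ) :
    μ ^ 2 * (M⁻¹ *ᵥ v ⬝ᵥ M⁻¹ *ᵥ v) ≤ v ⬝ᵥ v := by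
  set w := M⁻¹ *ᵥ v
  have hMw : M *ᵥ w = v := by
    rw [mulVec_mulVec, mul_nonsing_inv M (isUnit_det_of_coercive hμ hM), one_mulVec]
  have hw : μ * (w ⬝ᵥ w) ≤ w ⬝ᵥ v := hMw ▸ hM w
  rcases (dotProduct_self_nonneg w).eq_or_lt with hw0 | hwpos
  · rw [← hw0, mul_zero]
    exact dotProduct_self_nonneg v
  · refine le_of_mul_le_mul_left ?_ hwpos
    calc w ⬝ᵥ w * (μ ^ 2 * (w ⬝ᵥ w)) = (μ * (w ⬝ᵥ w)) ^ 2 := by ring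
      _ ≤ (w ⬝ᵥ v) ^ 2 := pow_le_pow_left₀ (by positivity) hw 2
      _ ≤ w ⬝ᵥ w * (v ⬝ᵥ v) := sq_dotProduct_le_dotProduct_self_mul w v

theorem sq_mul_dotProduct_inv_mulVec_le (hμ : 0 < μ)
    (hM : ∀ x, μ * (x ⬝ᵥ x) ≤ x ⬝ᵥ M *ᵥ x) (u v : ι → ℝ) :
    (μ * (u ⬝ᵥ M⁻¹ *ᵥ v)) ^ 2 ≤ (u ⬝ᵥ u) * (v ⬝ᵥ v) :=
  calc (μ * (u ⬝ᵥ M⁻¹ *ᵥ v)) ^ 2 = (u ⬝ᵥ M⁻¹ *ᵥ v) ^ 2 * μ ^ 2 := by ring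
    _ ≤ (u ⬝ᵥ u) * (M⁻¹ *ᵥ v ⬝ᵥ M⁻¹ *ᵥ v) * μ ^ 2 := by
        gcongr; exact sq_dotProduct_le_dotProduct_self_mul u _
    _ = (u ⬝ᵥ u) * (μ ^ 2 * (M⁻¹ *ᵥ v ⬝ᵥ M⁻¹ *ᵥ v)) := by ring
    _ ≤ (u ⬝ᵥ u) * (v ⬝ᵥ v) := by
        gcongr
        · exact dotProduct_self_nonneg u
        · exact sq_mul_dotProduct_self_inv_mulVec_le hμ hM v

theorem abs_inv_sub_diagonal_inv_apply_le (hμ : 0 < μ)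
    (hM : ∀ x, μ * (x ⬝ᵥ x) ≤ x ⬝ᵥ M *ᵥ x) {d : ι → ℝ} {δ α : ℝ} (hδ : 0 < δ)
    (hd : ∀ i, δ ≤ d i) (hα : ∀ i j, |(M - diagonal d) i j| ≤ α) (i j : ι) :
    |(M⁻¹ - diagonal fun k ↦ (d k)⁻¹) i j| ≤ (Fintype.card ι * α ^ 2 / μ + α) / δ ^ 2 := by
  set A := M - diagonal d
  have hd_pos : ∀ k, 0 < d k := fun k ↦ hδ.trans_le (hd k)
  have hd0 : ∀ k, d k ≠ 0 := fun k ↦ (hd_pos k).ne'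
  have hdet := isUnit_det_of_coercive hμ hM
  have hexp : M⁻¹ - diagonal (fun k ↦ (d k)⁻¹)
      = diagonal (fun k ↦ (d k)⁻¹) * (A * M⁻¹ * A - A) * diagonal (fun k ↦ (d k)⁻¹) :=
    sub_eq_second_order_resolvent (mul_nonsing_inv M hdet) (nonsing_inv_mul M hdet)
      (by simp [diagonal_mul_diagonal, hd0]) (by simp [diagonal_mul_diagonal, hd0])
  have hAMA : |(A * M⁻¹ * A) i j| ≤ Fintype.card ι * α ^ 2 / μ := by
    have hrow : ∀ k, A k ⬝ᵥ A k ≤ Fintype.card ι * α ^ 2 :=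
      fun k ↦ dotProduct_self_le_card_mul_sq (hα k)
    have hcol : Aᵀ j ⬝ᵥ Aᵀ j ≤ Fintype.card ι * α ^ 2 :=
      dotProduct_self_le_card_mul_sq fun k ↦ hα k j
    rw [le_div_iff₀' hμ, ← abs_of_pos hμ, ← abs_mul]
    refine abs_le_of_sq_le_sq ?_ ((dotProduct_self_nonneg _).trans (hrow i))
    calc (μ * (A * M⁻¹ * A) i j) ^ 2 = (μ * (A i ⬝ᵥ M⁻¹ *ᵥ Aᵀ j)) ^ 2 := by
          rw [Matrix.mul_assoc]; rfl
      _ ≤ (A i ⬝ᵥ A i) * (Aᵀ j ⬝ᵥ Aᵀ j) := sq_mul_dotProduct_inv_mulVec_le hμ hM _ _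
      _ ≤ _ := by
          rw [sq]; exact mul_le_mul (hrow i) hcol (dotProduct_self_nonneg _) (by positivity)
  rw [hexp, mul_diagonal, diagonal_mul, abs_mul, abs_mul, abs_inv, abs_inv,
    abs_of_pos (hd_pos i), abs_of_pos (hd_pos j)]
  have hentry : |(A * M⁻¹ * A - A) i j| ≤ Fintype.card ι * α ^ 2 / μ + α :=
    (abs_sub _ _).trans (add_le_add hAMA (hα i j))
  calc (d i)⁻¹ * |(A * M⁻¹ * A - A) i j| * (d j)⁻¹
      ≤ δ⁻¹ * (Fintype.card ι * α ^ 2 / μ + α) * δ⁻¹ := by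
        have hdi := hd_pos i
        have hdj := hd_pos j
        have hα0 : 0 ≤ α := (abs_nonneg _).trans (hα i j)
        gcongr
        exacts [hd i, hd j]
    _ = _ := by ring

end Matrix

section Balanced

variable [DecidableEq ι]

theorem two_mul_dotProduct_mulVec_eq_sum_ne {R : Type*} [CommRing R] {V : Matrix ι ι R}
    (hsymm : ∀ i j, V i j = V j i) (hdiag : ∀ i, V i i = ∑ j ∈ univ.filter (· ≠ i), V i j)
    (x : ι → R) :
    2 * (x ⬝ᵥ V *ᵥ x) = ∑ i, ∑ j ∈ univ.filter (· ≠ i), V i j * (x i + x j) ^ 2 := by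
  have hrow : ∀ i, ∑ j, V i j = 2 * V i i := fun i ↦ by
    rw [two_mul, ← add_sum_erase _ _ (mem_univ i), ← filter_ne', ← hdiag]
  have hcol : ∀ j, ∑ i, V i j = 2 * V j j := fun j ↦ by
    rw [← hrow]; exact sum_congr rfl fun i _ ↦ hsymm i j
  have hexpand : ∀ i, ∑ j, V i j * (x i + x j) ^ 2
      = x i ^ 2 * ∑ j, V i j + 2 * x i * (V *ᵥ x) i + ∑ j, V i j * x j ^ 2 := fun i ↦ by
    simp only [mulVec, dotProduct, mul_sum, ← sum_add_distrib]
    exact sum_congr rfl fun j _ ↦ by ring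
  simp only [filter_ne', sum_erase_eq_sub (mem_univ _), hexpand, hrow, sum_sub_distrib,
    sum_add_distrib]
  rw [sum_comm (f := fun i j ↦ V i j * x j ^ 2)]
  simp only [← sum_mul, hcol, dotProduct, mul_sum]
  rw [← sum_add_distrib, ← sum_add_distrib, ← sum_sub_distrib]
  exact sum_congr rfl fun i _ ↦ by ring

theorem sum_sum_ne_add_sq {R : Type*} [CommRing R] (x : ι → R) :
    ∑ i, ∑ j ∈ univ.filter (· ≠ i), (x i + x j) ^ 2
      = 2 * ((Fintype.card ι - 2) * (x ⬝ᵥ x) + (∑ i, x i) ^ 2) := by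
  have hexpand : ∀ i, ∑ j, (x i + x j) ^ 2
      = Fintype.card ι * x i ^ 2 + 2 * x i * ∑ j, x j + ∑ j, x j ^ 2 := fun i ↦ by
    simp only [add_sq, sum_add_distrib, ← mul_sum, sum_const, card_univ, nsmul_eq_mul]
  simp only [filter_ne', sum_erase_eq_sub (mem_univ _), hexpand, sum_sub_distrib,
    sum_add_distrib, ← mul_sum, ← sum_mul, ← two_mul, mul_pow, dotProduct, ← sq,
    sum_const, card_univ, nsmul_eq_mul]
  ring

theorem mul_dotProduct_self_le_dotProduct_mulVec {V : Matrix ι ι ℝ}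
    (hsymm : ∀ i j, V i j = V j i) (hdiag : ∀ i, V i i = ∑ j ∈ univ.filter (· ≠ i), V i j)
    {a : ℝ} (ha : 0 ≤ a) (hoff : ∀ i j, i ≠ j → a ≤ V i j) (x : ι → ℝ) :
    (Fintype.card ι - 2) * a * (x ⬝ᵥ x) ≤ x ⬝ᵥ V *ᵥ x := by
  have hsum : a * ∑ i, ∑ j ∈ univ.filter (· ≠ i), (x i + x j) ^ 2 ≤ 2 * (x ⬝ᵥ V *ᵥ x) := by
    rw [two_mul_dotProduct_mulVec_eq_sum_ne hsymm hdiag, mul_sum]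
    refine sum_le_sum fun i _ ↦ ?_
    rw [mul_sum]
    exact sum_le_sum fun j hj ↦
      mul_le_mul_of_nonneg_right (hoff i j (mem_filter.mp hj).2.symm) (sq_nonneg _)
  rw [sum_sum_ne_add_sq] at hsum
  nlinarith [sq_nonneg (∑ i, x i)]

theorem card_sub_one_mul_le_apply_self {V : Matrix ι ι ℝ}
    (hdiag : ∀ i, V i i = ∑ j ∈ univ.filter (· ≠ i), V i j)
    {a : ℝ} (hoff : ∀ i j, i ≠ j → a ≤ V i j) (i : ι) :
    (Fintype.card ι - 1) * a ≤ V i i := by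
  have hcard : ((univ.filter (· ≠ i)).card : ℝ) = Fintype.card ι - 1 := by
    rw [filter_ne', ← card_univ, ← card_erase_add_one (mem_univ i)]
    push_cast; ring
  rw [hdiag, ← hcard, ← nsmul_eq_mul]
  exact card_nsmul_le_sum _ _ _ fun j hj ↦ hoff i j (mem_filter.mp hj).2.symm

end Balanced

theorem inverse_approx_diagonal (n : ℕ) (hn : 3 ≤ n) (b c : ℝ) (hc : 0 < c) (hcb : c ≤ b)
    (V : Matrix (Fin n) (Fin n) ℝ)
    (hsymm : ∀ i j, V i j = V j i)
    (hoff : ∀ i j, i ≠ j → 1 / b ≤ V i j ∧ V i j ≤ 1 / c)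
    (hdiag : ∀ i, V i i = ∑ j ∈ univ.filter (· ≠ i), V i j) :
    ∀ i j, |(V⁻¹ - Matrix.diagonal fun k => 1 / V k k) i j|
      ≤ 2 * b ^ 2 / (c * ((n : ℝ) - 1) ^ 2)
          * ((n : ℝ) * b / (2 * ((n : ℝ) - 2) * c) + 1 / 2) := by
  intro i j
  have hb : 0 < b := hc.trans_le hcb
  have hn2 : (0 : ℝ) < n - 2 := by
    have : (3 : ℝ) ≤ n := by exact_mod_cast hn
    linarith
  have hlower : ∀ k l, k ≠ l → 1 / b ≤ V k l := fun k l h ↦ (hoff k l h).1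
  have hcoer : ∀ x, (n - 2) / b * (x ⬝ᵥ x) ≤ x ⬝ᵥ V *ᵥ x := fun x ↦ by
    simpa [div_eq_mul_inv] using
      mul_dotProduct_self_le_dotProduct_mulVec hsymm hdiag (by positivity) hlower x
  have hdiag_ge : ∀ k, (n - 1) / b ≤ V k k := fun k ↦ by
    simpa [div_eq_mul_inv] using card_sub_one_mul_le_apply_self hdiag hlower k
  have hoff_abs : ∀ k l, |(V - diagonal fun k ↦ V k k) k l| ≤ 1 / c := fun k l ↦ by
    rcases eq_or_ne k l with rfl | hkl
    · simp [hc.le]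
    · rw [Matrix.sub_apply, diagonal_apply_ne _ hkl, sub_zero, abs_le]
      have hb' : 0 < 1 / b := by positivity
      constructor <;> linarith [hoff k l hkl]
  have hn1 : (0 : ℝ) < n - 1 := by linarith
  have key := abs_inv_sub_diagonal_inv_apply_le (by positivity) hcoer (by positivity)
    hdiag_ge hoff_abs i j
  simp only [one_div] at key ⊢
  refine key.trans_eq ?_
  simp only [Fintype.card_fin]
  field_simp
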